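/- Let K be an n×n symmetric positive definite real matrix with K = K^{1/2} K^{1/2}. For X, Y ∈ ℝ^{n×m}, a minimizer over rank-k matrices M of the weighted Frobenius norm ‖K^{1/2}(Y − M X)‖_F is M_k⋆ = (K^{1/2})^{-1} P'_k K^{1/2} Y X†, where P'_k is the orthogonal projector onto the span of the top k left singular vectors of Z' = K^{1/2} Y X† X. -/

import Mathlib

/-!
Put `Z = K^{1/2} Y X† X`. As `X† X` is an orthogonal projection fixing the rows of every `N X`,
Pythagoras splits `‖K^{1/2} (Y - N X)‖²` into `‖Z - K^{1/2} N X‖²` plus a term independent of `N`,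
and `K^{1/2} M_k⋆ X = P'_k Z`. What remains is the Eckart–Young theorem for `Z = U Σ Vᵀ`: if `B`
has rank `≤ k` and `P` is the orthogonal projection onto its column space, then
`‖Z - B‖² ≥ ‖(1 - P) Z‖² = ‖Z‖² - ‖P Z‖²`, while `‖P Z‖² = ∑ᵢ (Uᵀ P U)ᵢᵢ σᵢ²` has weights in
`[0, 1]` of total mass `tr P ≤ k`, so it is at most `∑_{i<k} σᵢ² = ‖P'_k Z‖²`.
-/

open Matrix

noncomputable section

/-- `Xd` is the Moore–Penrose pseudoinverse of `X` (the four Penrose conditions). -/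
def IsMoorePenrose {n m : ℕ} (X : Matrix (Fin n) (Fin m) ℝ)
    (Xd : Matrix (Fin m) (Fin n) ℝ) : Prop :=
  X * Xd * X = X ∧ Xd * X * Xd = Xd ∧ (X * Xd)ᵀ = X * Xd ∧ (Xd * X)ᵀ = Xd * X

def frobSq {n m : ℕ} (A : Matrix (Fin n) (Fin m) ℝ) : ℝ := ∑ i, ∑ j, (A i j) ^ 2

def frob {n m : ℕ} (A : Matrix (Fin n) (Fin m) ℝ) : ℝ := Real.sqrt (frobSq A)

def rdiag (n m : ℕ) (σ : ℕ → ℝ) : Matrix (Fin n) (Fin m) ℝ :=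
  Matrix.of fun i j => if (i : ℕ) = (j : ℕ) then σ (i : ℕ) else 0

def rdiagTrunc (n m k : ℕ) (σ : ℕ → ℝ) : Matrix (Fin n) (Fin m) ℝ :=
  Matrix.of fun i j => if (i : ℕ) = (j : ℕ) ∧ (i : ℕ) < k then σ (i : ℕ) else 0

def dproj (n k : ℕ) : Matrix (Fin n) (Fin n) ℝ :=
  Matrix.of fun i j => if i = j ∧ (i : ℕ) < k then (1 : ℝ) else 0

def IsSVDecomp {n m : ℕ} (A : Matrix (Fin n) (Fin m) ℝ) (U : Matrix (Fin n) (Fin n) ℝ)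
    (V : Matrix (Fin m) (Fin m) ℝ) (σ : ℕ → ℝ) : Prop :=
  U * Uᵀ = 1 ∧ Uᵀ * U = 1 ∧ V * Vᵀ = 1 ∧ Vᵀ * V = 1 ∧
  (∀ i, 0 ≤ σ i) ∧ (∀ i j, i ≤ j → σ j ≤ σ i) ∧ (∀ i, min n m ≤ i → σ i = 0) ∧
  A = U * rdiag n m σ * Vᵀ

open Finset

-- The bathtub principle.
theorem Finset.sum_mul_le_sum_of_le_of_le {ι : Type*} [Fintype ι] [DecidableEq ι] (F : Finset ι)
    {s t : ι → ℝ} {c : ℝ} (hc : 0 ≤ c) (hsF : ∀ i ∈ F, c ≤ s i) (hsFc : ∀ i ∉ F, s i ≤ c)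
    (ht₀ : ∀ i, 0 ≤ t i) (ht₁ : ∀ i, t i ≤ 1) (ht : ∑ i, t i ≤ #F) :
    ∑ i, t i * s i ≤ ∑ i ∈ F, s i := by
  have hterm : ∀ i, t i * s i ≤ t i * c + if i ∈ F then s i - c else 0 := by
    intro i
    split_ifs with hi
    · nlinarith [ht₁ i, hsF i hi]
    · nlinarith [ht₀ i, hsFc i hi]
  calc ∑ i, t i * s i ≤ ∑ i, (t i * c + if i ∈ F then s i - c else 0) :=
        sum_le_sum fun i _ => hterm i
    _ = ∑ i ∈ F, s i + c * (∑ i, t i - #F) := by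
      rw [sum_add_distrib, sum_ite_mem, univ_inter, sum_sub_distrib, ← sum_mul]
      simp only [sum_const, nsmul_eq_mul]
      ring
    _ ≤ ∑ i ∈ F, s i := by nlinarith

section StarProjection

variable {R : Type*} [Ring R] [StarRing R]

theorem IsStarProjection.star_mul_mul {p u : R} (hp : IsStarProjection p) (hu : u * star u = 1) :
    IsStarProjection (star u * p * u) where
  isIdempotentElem := by
    simp only [IsIdempotentElem, mul_assoc, ← mul_assoc u (star u), hu, one_mul]
    rw [← mul_assoc p p, hp.isIdempotentElem.eq]
  isSelfAdjoint := hp.isSelfAdjoint.conjugate' u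

end StarProjection

section MatrixStarProjection

variable {ι : Type*} [Fintype ι]

open scoped ComplexOrder in
theorem IsStarProjection.posSemidef {𝕜 : Type*} [RCLike 𝕜] {P : Matrix ι ι 𝕜}
    (hP : IsStarProjection P) : P.PosSemidef := by
  simpa [← star_eq_conjTranspose, hP.isSelfAdjoint.star_eq, hP.isIdempotentElem.eq]
    using posSemidef_conjTranspose_mul_self P

theorem IsStarProjection.diag_mem_Icc [DecidableEq ι] {P : Matrix ι ι ℝ}
    (hP : IsStarProjection P) (i : ι) : P i i ∈ Set.Icc 0 1 := by
  have h := hP.one_sub.posSemidef.diag_nonneg (i := i)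
  simp only [Matrix.sub_apply, one_apply_eq] at h
  exact ⟨hP.posSemidef.diag_nonneg, by linarith⟩

theorem IsStarProjection.transpose_eq {P : Matrix ι ι ℝ} (hP : IsStarProjection P) : Pᵀ = P := by
  rw [← conjTranspose_eq_transpose_of_trivial, ← star_eq_conjTranspose]
  exact hP.isSelfAdjoint.star_eq

theorem IsStarProjection.transpose_mul_mul [DecidableEq ι] {P U : Matrix ι ι ℝ}
    (hP : IsStarProjection P) (hU : U * Uᵀ = 1) : IsStarProjection (Uᵀ * P * U) := by
  simp only [← conjTranspose_eq_transpose_of_trivial, ← star_eq_conjTranspose] at hU ⊢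
  exact hP.star_mul_mul hU

end MatrixStarProjection

namespace Matrix

variable {ι κ 𝕜 : Type*} [Fintype ι] [DecidableEq ι] [Fintype κ] [DecidableEq κ] [RCLike 𝕜]

theorem exists_isStarProjection_mul_eq_self (B : Matrix ι κ 𝕜) :
    ∃ P : Matrix ι ι 𝕜, IsStarProjection P ∧ P * B = B ∧ P.trace = B.rank := by
  set V := LinearMap.range (toEuclideanLin B)
  refine ⟨(toEuclideanCLM (n := ι) (𝕜 := 𝕜)).symm V.starProjection,
    (isStarProjection_starProjection (U := V)).map (toEuclideanCLM (n := ι) (𝕜 := 𝕜)).symm,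
    ?_, ?_⟩
  · refine (toEuclideanLin (𝕜 := 𝕜)).injective ?_
    rw [toLpLin_mul_same, ← coe_toEuclideanCLM_eq_toEuclideanLin, StarAlgEquiv.apply_symm_apply]
    ext x : 1
    exact V.starProjection_eq_self_iff.mpr (LinearMap.mem_range_self _ x)
  · have hV : LinearMap.IsProj V (V.starProjection : EuclideanSpace 𝕜 ι →ₗ[𝕜] _) :=
      ⟨V.starProjection_apply_mem, fun _ => V.starProjection_eq_self_iff.mpr⟩
    rw [← trace_toLin_eq _ (EuclideanSpace.basisFun ι 𝕜).toBasis,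
      ← toEuclideanLin_eq_toLin_orthonormal, ← coe_toEuclideanCLM_eq_toEuclideanLin,
      StarAlgEquiv.apply_symm_apply, hV.trace,
      rank_eq_finrank_range_toLin B (EuclideanSpace.basisFun ι 𝕜).toBasis
        (EuclideanSpace.basisFun κ 𝕜).toBasis, ← toEuclideanLin_eq_toLin_orthonormal]

end Matrix

section Frobenius

variable {n m : ℕ}

theorem frobSq_eq_trace_mul_transpose (A : Matrix (Fin n) (Fin m) ℝ) :
    frobSq A = (A * Aᵀ).trace := by
  simp [frobSq, trace, mul_apply, sq]

theorem frobSq_nonneg (A : Matrix (Fin n) (Fin m) ℝ) : 0 ≤ frobSq A :=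
  sum_nonneg fun _ _ => sum_nonneg fun _ _ => sq_nonneg _

theorem frobSq_transpose (A : Matrix (Fin n) (Fin m) ℝ) : frobSq Aᵀ = frobSq A := by
  rw [frobSq_eq_trace_mul_transpose, frobSq_eq_trace_mul_transpose, transpose_transpose,
    trace_mul_comm]

theorem frobSq_isStarProjection_mul {P : Matrix (Fin n) (Fin n) ℝ} (hP : IsStarProjection P)
    (A : Matrix (Fin n) (Fin m) ℝ) : frobSq (P * A) = (P * (A * Aᵀ)).trace := by
  rw [frobSq_eq_trace_mul_transpose, transpose_mul, hP.transpose_eq, ← Matrix.mul_assoc,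
    trace_mul_comm, ← Matrix.mul_assoc, ← Matrix.mul_assoc, hP.isIdempotentElem.eq,
    Matrix.mul_assoc]

theorem frobSq_eq_isStarProjection_mul_add {P : Matrix (Fin n) (Fin n) ℝ}
    (hP : IsStarProjection P) (A : Matrix (Fin n) (Fin m) ℝ) :
    frobSq A = frobSq (P * A) + frobSq ((1 - P) * A) := by
  rw [frobSq_isStarProjection_mul hP, frobSq_isStarProjection_mul hP.one_sub, ← trace_add,
    ← add_mul, add_sub_cancel, one_mul, frobSq_eq_trace_mul_transpose]

theorem frobSq_eq_mul_isStarProjection_add {Q : Matrix (Fin m) (Fin m) ℝ}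
    (hQ : IsStarProjection Q) (A : Matrix (Fin n) (Fin m) ℝ) :
    frobSq A = frobSq (A * Q) + frobSq (A * (1 - Q)) := by
  rw [← frobSq_transpose A, frobSq_eq_isStarProjection_mul_add hQ, ← frobSq_transpose (A * Q),
    ← frobSq_transpose (A * (1 - Q)), transpose_mul, transpose_mul, hQ.transpose_eq,
    hQ.one_sub.transpose_eq]

end Frobenius

theorem dproj_eq_diagonal (n k : ℕ) :
    dproj n k = diagonal fun i : Fin n => if (i : ℕ) < k then 1 else 0 := by
  ext i j
  by_cases h : i = j <;> simp [dproj, diagonal, h]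

theorem isStarProjection_dproj (n k : ℕ) : IsStarProjection (dproj n k) := by
  rw [dproj_eq_diagonal]
  constructor
  · simp [IsIdempotentElem, diagonal_mul_diagonal]
  · simp [IsSelfAdjoint, star_eq_conjTranspose]

theorem isStarProjection_mul_dproj_mul_transpose {n : ℕ} (k : ℕ) {U : Matrix (Fin n) (Fin n) ℝ}
    (hU : Uᵀ * U = 1) : IsStarProjection (U * dproj n k * Uᵀ) := by
  simpa using (isStarProjection_dproj n k).transpose_mul_mul (U := Uᵀ) (by simpa using hU)

theorem rank_dproj_le (n k : ℕ) : (dproj n k).rank ≤ k := by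
  rw [dproj_eq_diagonal, rank_diagonal]
  refine (Fintype.card_le_of_injective (fun i => (⟨i.1, by simpa using i.2⟩ : Fin k)) ?_).trans
    (Fintype.card_fin k).le
  intro i j h
  simpa [Fin.ext_iff, Subtype.ext_iff] using h

theorem rdiag_mul_transpose {n m : ℕ} {σ : ℕ → ℝ} (hσ : ∀ i, min n m ≤ i → σ i = 0) :
    rdiag n m σ * (rdiag n m σ)ᵀ = diagonal fun i : Fin n => σ i ^ 2 := by
  ext i j
  simp only [mul_apply, transpose_apply, rdiag, of_apply, diagonal_apply]
  by_cases hij : i = j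
  · subst hij
    by_cases him : (i : ℕ) < m
    · rw [sum_eq_single ⟨i, him⟩ (fun l _ hl => by simp [Fin.ext_iff] at hl ⊢; grind) (by simp)]
      simp [sq]
    · simp [hσ i (by omega)]
  · rw [if_neg hij]
    refine sum_eq_zero fun l _ => ?_
    split_ifs <;> simp_all [Fin.ext_iff]

namespace IsSVDecomp

variable {n m k : ℕ} {A : Matrix (Fin n) (Fin m) ℝ} {U : Matrix (Fin n) (Fin n) ℝ}
  {V : Matrix (Fin m) (Fin m) ℝ} {σ : ℕ → ℝ}

theorem mul_transpose_eq (hA : IsSVDecomp A U V σ) :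
    A * Aᵀ = U * diagonal (fun i : Fin n => σ i ^ 2) * Uᵀ := by
  obtain ⟨-, -, -, hV, -, -, hσ, rfl⟩ := hA
  rw [← rdiag_mul_transpose hσ]
  simp only [transpose_mul, transpose_transpose, Matrix.mul_assoc]
  rw [← Matrix.mul_assoc Vᵀ V, hV, Matrix.one_mul]

theorem frobSq_isStarProjection_mul (hA : IsSVDecomp A U V σ) {P : Matrix (Fin n) (Fin n) ℝ}
    (hP : IsStarProjection P) : frobSq (P * A) = ∑ i : Fin n, (Uᵀ * P * U) i i * σ i ^ 2 := by
  rw [_root_.frobSq_isStarProjection_mul hP, hA.mul_transpose_eq, ← Matrix.mul_assoc,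
    ← Matrix.mul_assoc, trace_mul_comm, ← Matrix.mul_assoc, ← Matrix.mul_assoc]
  simp [trace, mul_diagonal]

theorem frobSq_mul_le_of_trace_le (hA : IsSVDecomp A U V σ) {P : Matrix (Fin n) (Fin n) ℝ}
    (hP : IsStarProjection P) (htr : P.trace ≤ k) :
    frobSq (P * A) ≤ ∑ i : Fin n with i.val < k, σ i ^ 2 := by
  rw [hA.frobSq_isStarProjection_mul hP]
  obtain ⟨hU, -, -, -, hσ₀, hσ, -⟩ := hA
  have hQ := hP.transpose_mul_mul hU
  have hσ_sq_anti : ∀ i j, i ≤ j → σ j ^ 2 ≤ σ i ^ 2 := fun i j hij =>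
    pow_le_pow_left₀ (hσ₀ j) (hσ i j hij) 2
  refine sum_mul_le_sum_of_le_of_le _ (sq_nonneg (σ k)) ?_ ?_ (fun i => (hQ.diag_mem_Icc i).1)
    (fun i => (hQ.diag_mem_Icc i).2) ?_
  · intro i hi
    exact hσ_sq_anti _ _ (mem_filter.mp hi).2.le
  · intro i hi
    exact hσ_sq_anti _ _ (by simpa using hi)
  · have hsum : ∑ i, (Uᵀ * P * U) i i = P.trace := by
      change (Uᵀ * P * U).trace = P.trace
      rw [trace_mul_cycle, hU, Matrix.one_mul]
    rw [Fin.card_filter_val_lt, Nat.cast_min]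
    refine le_min ?_ (hsum ▸ htr)
    simpa using sum_le_sum fun i (_ : i ∈ univ) => (hQ.diag_mem_Icc i).2

theorem frobSq_truncation_mul (hA : IsSVDecomp A U V σ) :
    frobSq (U * dproj n k * Uᵀ * A) = ∑ i : Fin n with i.val < k, σ i ^ 2 := by
  rw [hA.frobSq_isStarProjection_mul (isStarProjection_mul_dproj_mul_transpose k hA.2.1),
    sum_filter]
  refine sum_congr rfl fun i _ => ?_
  simp [Matrix.mul_assoc, ← Matrix.mul_assoc Uᵀ U, hA.2.1, dproj_eq_diagonal]

theorem frobSq_sub_truncation_le (hA : IsSVDecomp A U V σ) {B : Matrix (Fin n) (Fin m) ℝ}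
    (hB : B.rank ≤ k) : frobSq (A - U * dproj n k * Uᵀ * A) ≤ frobSq (A - B) := by
  obtain ⟨P, hP, hPB, htr⟩ := exists_isStarProjection_mul_eq_self B
  have hPk := isStarProjection_mul_dproj_mul_transpose k hA.2.1
  have hPA : frobSq (P * A) ≤ frobSq (U * dproj n k * Uᵀ * A) :=
    (hA.frobSq_mul_le_of_trace_le hP (by rw [htr]; exact_mod_cast hB)).trans_eq
      hA.frobSq_truncation_mul.symm
  have hAB : (1 - P) * (A - B) = (1 - P) * A := by
    rw [Matrix.mul_sub, Matrix.sub_mul _ _ B, Matrix.one_mul, hPB, sub_self, sub_zero]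
  calc frobSq (A - U * dproj n k * Uᵀ * A)
      = frobSq A - frobSq (U * dproj n k * Uᵀ * A) := by
        rw [frobSq_eq_isStarProjection_mul_add hPk A, Matrix.sub_mul, Matrix.one_mul]
        ring
    _ ≤ frobSq A - frobSq (P * A) := by gcongr
    _ = frobSq ((1 - P) * (A - B)) := by
        rw [hAB, frobSq_eq_isStarProjection_mul_add hP A]
        ring
    _ ≤ frobSq (A - B) := by
        rw [frobSq_eq_isStarProjection_mul_add hP (A - B)]
        linarith [frobSq_nonneg (P * (A - B))]

end IsSVDecomp

namespace IsMoorePenrose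

variable {n m : ℕ} {X : Matrix (Fin n) (Fin m) ℝ} {Xd : Matrix (Fin m) (Fin n) ℝ}

theorem isStarProjection_mul (h : IsMoorePenrose X Xd) : IsStarProjection (Xd * X) := by
  obtain ⟨-, hXdXXd, -, hXdX⟩ := h
  constructor
  · rw [IsIdempotentElem, ← Matrix.mul_assoc, hXdXXd]
  · rw [IsSelfAdjoint, star_eq_conjTranspose, conjTranspose_eq_transpose_of_trivial, hXdX]

theorem frobSq_sub_mul {p : ℕ} (h : IsMoorePenrose X Xd) (C : Matrix (Fin p) (Fin m) ℝ)
    (W : Matrix (Fin p) (Fin n) ℝ) :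
    frobSq (C - W * X) = frobSq (C * Xd * X - W * X) + frobSq (C * (1 - Xd * X)) := by
  have hWX : W * X * (Xd * X) = W * X := by rw [Matrix.mul_assoc, ← Matrix.mul_assoc X, h.1]
  rw [frobSq_eq_mul_isStarProjection_add h.isStarProjection_mul, Matrix.sub_mul, hWX,
    Matrix.sub_mul, Matrix.mul_sub (W * X), Matrix.mul_one, hWX, sub_self, sub_zero,
    Matrix.mul_assoc C]

end IsMoorePenrose

theorem weighted_low_rank_minimizer_general {n m k : ℕ}
    (Ksq : Matrix (Fin n) (Fin n) ℝ) (hKsq_pd : Ksq.PosDef)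
    (X Y : Matrix (Fin n) (Fin m) ℝ) (Xd : Matrix (Fin m) (Fin n) ℝ)
    (hXd : IsMoorePenrose X Xd)
    (Uz : Matrix (Fin n) (Fin n) ℝ) (Vz : Matrix (Fin m) (Fin m) ℝ) (σ : ℕ → ℝ)
    (hSVD : IsSVDecomp (Ksq * Y * Xd * X) Uz Vz σ)
    (Pk : Matrix (Fin n) (Fin n) ℝ) (hPk : Pk = Uz * dproj n k * Uzᵀ)
    (Mk : Matrix (Fin n) (Fin n) ℝ) (hMk : Mk = Ksq⁻¹ * Pk * Ksq * Y * Xd) :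
    Mk.rank ≤ k ∧
    ∀ M : Matrix (Fin n) (Fin n) ℝ, M.rank ≤ k →
      frob (Ksq * (Y - Mk * X)) ≤ frob (Ksq * (Y - M * X)) := by
  have hPk_rank : Pk.rank ≤ k := hPk ▸
    (rank_mul_le_left _ _).trans ((rank_mul_le_right _ _).trans (rank_dproj_le n k))
  refine ⟨hMk ▸ ?_, fun M hM => Real.sqrt_le_sqrt ?_⟩
  · exact ((rank_mul_le_left _ _).trans <| (rank_mul_le_left _ _).trans <|
      (rank_mul_le_left _ _).trans <| (rank_mul_le_right _ _)).trans hPk_rank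
  have hsplit : ∀ N : Matrix (Fin n) (Fin n) ℝ, frobSq (Ksq * (Y - N * X)) =
      frobSq (Ksq * Y * Xd * X - Ksq * N * X) + frobSq (Ksq * Y * (1 - Xd * X)) := fun N => by
    rw [Matrix.mul_sub, ← Matrix.mul_assoc, hXd.frobSq_sub_mul]
  have hMkX : Ksq * Mk * X = Pk * (Ksq * Y * Xd * X) := by
    simp only [hMk, ← Matrix.mul_assoc,
      mul_nonsing_inv _ ((isUnit_iff_isUnit_det Ksq).mp hKsq_pd.isUnit), Matrix.one_mul]
  rw [hsplit, hsplit, hMkX, hPk]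
  gcongr ?_ + _
  exact hSVD.frobSq_sub_truncation_le
    ((rank_mul_le_left _ _).trans ((rank_mul_le_right _ _).trans hM))

/-- for a symmetric positive definite `K` with symmetric square root
`K^{1/2}`, the matrix `M_k⋆ = (K^{1/2})⁻¹ P'_k K^{1/2} Y X†` (with `P'_k` the
projector onto the top `k` left singular vectors of `Z' = K^{1/2} Y X† X`)
minimizes the weighted Frobenius norm `‖K^{1/2}(Y − M X)‖_F` over matrices `M`
of rank at most `k`. -/
theorem weighted_low_rank_minimizer {n m k : ℕ}
    (K Ksq : Matrix (Fin n) (Fin n) ℝ) (hK : K.PosDef)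
    (hKsq_symm : Ksqᵀ = Ksq) (hKsq : Ksq * Ksq = K) (hKsq_pd : Ksq.PosDef)
    (X Y : Matrix (Fin n) (Fin m) ℝ) (Xd : Matrix (Fin m) (Fin n) ℝ)
    (hXd : IsMoorePenrose X Xd)
    (Uz : Matrix (Fin n) (Fin n) ℝ) (Vz : Matrix (Fin m) (Fin m) ℝ) (σ : ℕ → ℝ)
    (hSVD : IsSVDecomp (Ksq * Y * Xd * X) Uz Vz σ)
    (Pk : Matrix (Fin n) (Fin n) ℝ) (hPk : Pk = Uz * dproj n k * Uzᵀ)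
    (Mk : Matrix (Fin n) (Fin n) ℝ) (hMk : Mk = Ksq⁻¹ * Pk * Ksq * Y * Xd) :
    Mk.rank ≤ k ∧
    ∀ M : Matrix (Fin n) (Fin n) ℝ, M.rank ≤ k →
      frob (Ksq * (Y - Mk * X)) ≤ frob (Ksq * (Y - M * X)) :=
  weighted_low_rank_minimizer_general Ksq hKsq_pd X Y Xd hXd Uz Vz σ hSVD Pk hPk Mk hMk
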